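/- arXiv:2404.17689 — 2 statements merged into one kernel-verified Lean document; each statement's English description precedes it below -/
import Mathlib

section
/- Let α ∈ (0,1) and ρ' ∈ (0, (λ/γ)(1−α)/α). Suppose (ũ^k, ṽ^k)_{k≥1} ⊂ ℝ^n × ℝ^m satisfies, for every k ≥ 1: ũ^{k+1} ∈ prox_{αγ‖·‖₀}((1−α)ũ^k + αDṽ^k) and F(ũ^{k+1}, ṽ^{k+1}) − F(ũ^{k+1}, ṽ^k) ≤ (ρ'/2)‖ũ^{k+1} − ũ^k‖₂². Then there exists a positive integer N such that supp(ũ^k) = supp(ũ^N) for all k ≥ N. -/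
/-!
A point of `prox_{t‖·‖₀}(y)` agrees with `y` on its support, and each of its nonzero entries
has square at least `2t`; hence two such points at squared distance less than `2t` have the
same support. Testing the prox inequality of step `k` against `ũᵏ` and adding the bound on
the `v`-step gives the sufficient decrease
`F(ũᵏ⁺¹, ṽᵏ⁺¹) + c ‖ũᵏ⁺¹ - ũᵏ‖² ≤ F(ũᵏ, ṽᵏ)` with `c = λ(1-α)/(2γα) - ρ'/2 > 0`.
Since `F` is bounded below, the steps are square-summable, so eventually
`‖ũᵏ⁺¹ - ũᵏ‖² < 2αγ` and the support no longer changes.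
-/

open Matrix

noncomputable section

/-- Matrix–vector multiplication as a map between Euclidean spaces. -/
def mulVecE {n m : ℕ} (A : Matrix (Fin n) (Fin m) ℝ) (v : EuclideanSpace ℝ (Fin m)) :
    EuclideanSpace ℝ (Fin n) :=
  (EuclideanSpace.equiv (Fin n) ℝ).symm (A.mulVec ((EuclideanSpace.equiv (Fin m) ℝ) v))

/-- The `ℓ₀` "norm": the number of nonzero components, as a real number. -/
def l0 {n : ℕ} (u : EuclideanSpace ℝ (Fin n)) : ℝ := ({i : Fin n | u i ≠ 0}).ncard

/-- The support of a vector. -/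
def supp {n : ℕ} (u : EuclideanSpace ℝ (Fin n)) : Set (Fin n) := {i | u i ≠ 0}

/-- Membership `x ∈ prox_{t‖·‖₀}(y)`. -/
def InProxL0 {n : ℕ} (t : ℝ) (x y : EuclideanSpace ℝ (Fin n)) : Prop :=
  ∀ z : EuclideanSpace ℝ (Fin n),
    (1 / (2 * t)) * ‖x - y‖ ^ 2 + l0 x ≤ (1 / (2 * t)) * ‖z - y‖ ^ 2 + l0 z

/-- The objective `F(u,v) = ψ(Bv) + (λ/(2γ))‖u − Dv‖₂² + λ‖u‖₀`. -/
def Fobj {n m p : ℕ} (ψ : EuclideanSpace ℝ (Fin p) → ℝ) (B : Matrix (Fin p) (Fin m) ℝ)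
    (D : Matrix (Fin n) (Fin m) ℝ) (lam γ : ℝ) (u : EuclideanSpace ℝ (Fin n))
    (v : EuclideanSpace ℝ (Fin m)) : ℝ :=
  ψ (mulVecE B v) + (lam / (2 * γ)) * ‖u - mulVecE D v‖ ^ 2 + lam * l0 u

open Filter Topology

theorem EuclideanSpace.norm_add_single_sq {ι : Type*} [Fintype ι] [DecidableEq ι]
    (w : EuclideanSpace ℝ ι) (i : ι) (δ : ℝ) :
    ‖w + EuclideanSpace.single i δ‖ ^ 2 = ‖w‖ ^ 2 + 2 * δ * w i + δ ^ 2 := by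
  rw [norm_add_sq_real, EuclideanSpace.inner_single_right, PiLp.norm_single,
    Real.norm_eq_abs, sq_abs]
  simp only [conj_trivial]
  ring

theorem norm_sub_smul_add_smul_sq {E : Type*} [NormedAddCommGroup E] [InnerProductSpace ℝ E]
    (a b w : E) (α : ℝ) :
    ‖a - ((1 - α) • b + α • w)‖ ^ 2 =
      (1 - α) * ‖a - b‖ ^ 2 + α * ‖a - w‖ ^ 2 - α * (1 - α) * ‖b - w‖ ^ 2 := by
  have hay : a - ((1 - α) • b + α • w) = (a - b) + α • (b - w) := by module
  have haw : a - w = (a - b) + (b - w) := by abel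
  rw [hay, haw, norm_add_sq_real, norm_add_sq_real, inner_smul_right, norm_smul,
    Real.norm_eq_abs, mul_pow, sq_abs]
  ring

theorem l0_eq_ncard_supp {n : ℕ} (x : EuclideanSpace ℝ (Fin n)) : l0 x = (supp x).ncard := rfl

theorem l0_le_l0 {n : ℕ} {x z : EuclideanSpace ℝ (Fin n)} (h : supp z ⊆ supp x) :
    l0 z ≤ l0 x := by
  rw [l0_eq_ncard_supp, l0_eq_ncard_supp]
  exact_mod_cast Set.ncard_le_ncard h (Set.toFinite _)

namespace InProxL0

variable {n : ℕ} {t : ℝ} {x y : EuclideanSpace ℝ (Fin n)} {i : Fin n}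

theorem le_of_add_single (hxy : InProxL0 t x y) (i : Fin n) (δ : ℝ) :
    1 / (2 * t) * ‖x - y‖ ^ 2 + l0 x ≤
      1 / (2 * t) * (‖x - y‖ ^ 2 + 2 * δ * (x i - y i) + δ ^ 2) +
        l0 (x + EuclideanSpace.single i δ) := by
  have h := hxy (x + EuclideanSpace.single i δ)
  rwa [add_sub_right_comm, EuclideanSpace.norm_add_single_sq, PiLp.sub_apply] at h

theorem apply_eq_of_apply_ne_zero (hxy : InProxL0 t x y) (ht : 0 < t) (hi : x i ≠ 0) :
    x i = y i := by
  have hsupp : supp (x + EuclideanSpace.single i (y i - x i)) ⊆ supp x := by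
    intro j hj
    by_cases hji : j = i
    · exact hji ▸ hi
    · simpa [supp, PiLp.single_apply, hji] using hj
  have h := hxy.le_of_add_single i (y i - x i)
  have hl0 := l0_le_l0 hsupp
  have hsq : (x i - y i) ^ 2 ≤ 0 := by
    have : 0 < 1 / (2 * t) := by positivity
    nlinarith
  exact sub_eq_zero.mp (pow_eq_zero_iff two_ne_zero |>.mp (le_antisymm hsq (sq_nonneg _)))

theorem two_mul_le_sq_apply (hxy : InProxL0 t x y) (ht : 0 < t) (hi : x i ≠ 0) :
    2 * t ≤ x i ^ 2 := by
  have hsupp : supp (x + EuclideanSpace.single i (-x i)) = supp x \ {i} := by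
    ext j
    by_cases hji : j = i <;> simp [supp, PiLp.single_apply, hji]
  have hl0 : l0 (x + EuclideanSpace.single i (-x i)) + 1 = l0 x := by
    have h := Set.ncard_sdiff_singleton_add_one (show i ∈ supp x from hi)
    rw [← hsupp] at h
    rw [l0_eq_ncard_supp, l0_eq_ncard_supp]
    exact_mod_cast h
  have h := hxy.le_of_add_single i (-x i)
  rw [← hxy.apply_eq_of_apply_ne_zero ht hi] at h
  have : 1 ≤ 1 / (2 * t) * x i ^ 2 := by nlinarith
  rwa [one_div, inv_mul_eq_div, one_le_div (by positivity)] at this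

theorem supp_subset_of_norm_sub_sq_lt (hxy : InProxL0 t x y) (ht : 0 < t)
    {x' : EuclideanSpace ℝ (Fin n)} (h : ‖x - x'‖ ^ 2 < 2 * t) : supp x ⊆ supp x' := by
  intro i hi
  by_contra hi'
  have hcoord : x i ^ 2 ≤ ‖x - x'‖ ^ 2 := by
    simpa [show x' i = 0 from not_not.mp hi'] using
      pow_le_pow_left₀ (abs_nonneg _) (PiLp.norm_apply_le (x - x') i) 2
  linarith [hxy.two_mul_le_sq_apply ht hi]

theorem supp_eq_of_norm_sub_sq_lt (hxy : InProxL0 t x y) (ht : 0 < t)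
    {x' y' : EuclideanSpace ℝ (Fin n)} (hxy' : InProxL0 t x' y') (h : ‖x - x'‖ ^ 2 < 2 * t) :
    supp x = supp x' :=
  (hxy.supp_subset_of_norm_sub_sq_lt ht h).antisymm
    (hxy'.supp_subset_of_norm_sub_sq_lt ht (norm_sub_rev x x' ▸ h))

end InProxL0

theorem supp_eq_of_inProxL0_of_norm_sub_sq_lt {n : ℕ} {t : ℝ} (ht : 0 < t)
    {x : ℕ → EuclideanSpace ℝ (Fin n)} {N : ℕ}
    (hprox : ∀ k, N ≤ k → ∃ y, InProxL0 t (x k) y)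
    (hstep : ∀ k, N ≤ k → ‖x (k + 1) - x k‖ ^ 2 < 2 * t) :
    ∀ k, N ≤ k → supp (x k) = supp (x N) := by
  refine Nat.le_induction rfl fun k hk ih => ?_
  obtain ⟨y, hy⟩ := hprox k hk
  obtain ⟨y', hy'⟩ := hprox (k + 1) (by omega)
  rw [← ih]
  exact hy'.supp_eq_of_norm_sub_sq_lt ht hy (hstep k hk)

theorem tendsto_atTop_zero_of_add_mul_le {f d : ℕ → ℝ} {c : ℝ} (hc : 0 < c)
    (hd : ∀ k, 0 ≤ d k) (hf : BddBelow (Set.range f)) (h : ∀ k, f (k + 1) + c * d k ≤ f k) :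
    Tendsto d atTop (𝓝 0) := by
  obtain ⟨M, hM⟩ := hf
  have htelescope : ∀ K, f K + c * ∑ k ∈ Finset.range K, d k ≤ f 0 := by
    intro K
    induction K with
    | zero => simp
    | succ K ih =>
      rw [Finset.sum_range_succ]
      linarith [h K]
  refine (summable_of_sum_range_le (c := (f 0 - M) / c) hd fun K => ?_).tendsto_atTop_zero
  rw [le_div_iff₀' hc]
  linarith [htelescope K, hM ⟨K, rfl⟩]

section Fobj

variable {n m p : ℕ} {ψ : EuclideanSpace ℝ (Fin p) → ℝ} {B : Matrix (Fin p) (Fin m) ℝ}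
  {D : Matrix (Fin n) (Fin m) ℝ} {lam γ : ℝ}

theorem le_Fobj {M : ℝ} (hψ : ∀ w, M ≤ ψ w) (hlam : 0 ≤ lam) (hγ : 0 ≤ γ)
    (u : EuclideanSpace ℝ (Fin n)) (v : EuclideanSpace ℝ (Fin m)) :
    M ≤ Fobj ψ B D lam γ u v := by
  have := hψ (mulVecE B v)
  have : 0 ≤ lam / (2 * γ) * ‖u - mulVecE D v‖ ^ 2 := by positivity
  have : 0 ≤ lam * l0 u := mul_nonneg hlam (Nat.cast_nonneg _)
  unfold Fobj
  linarith

theorem Fobj_add_le_of_inProxL0 (hlam : 0 ≤ lam) (hγ : 0 < γ) {α : ℝ} (hα : 0 < α)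
    {a b : EuclideanSpace ℝ (Fin n)} {v : EuclideanSpace ℝ (Fin m)}
    (hprox : InProxL0 (α * γ) a ((1 - α) • b + α • mulVecE D v)) :
    Fobj ψ B D lam γ a v + lam * (1 - α) / (2 * γ * α) * ‖a - b‖ ^ 2 ≤
      Fobj ψ B D lam γ b v := by
  unfold Fobj
  set w := mulVecE D v
  have h := hprox b
  rw [norm_sub_smul_add_smul_sq, norm_sub_smul_add_smul_sq, sub_self, norm_zero] at h
  have key : (‖a - w‖ ^ 2 - ‖b - w‖ ^ 2) / (2 * γ) + (1 - α) / (2 * γ * α) * ‖a - b‖ ^ 2 ≤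
      l0 b - l0 a := by
    have e : (‖a - w‖ ^ 2 - ‖b - w‖ ^ 2) / (2 * γ) + (1 - α) / (2 * γ * α) * ‖a - b‖ ^ 2 =
        1 / (2 * (α * γ)) * (α * (‖a - w‖ ^ 2 - ‖b - w‖ ^ 2) + (1 - α) * ‖a - b‖ ^ 2) := by
      field_simp
    rw [e]
    linarith
  have e : lam * ((‖a - w‖ ^ 2 - ‖b - w‖ ^ 2) / (2 * γ) +
      (1 - α) / (2 * γ * α) * ‖a - b‖ ^ 2) = lam / (2 * γ) * ‖a - w‖ ^ 2 -
        lam / (2 * γ) * ‖b - w‖ ^ 2 + lam * (1 - α) / (2 * γ * α) * ‖a - b‖ ^ 2 := by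
    ring
  linarith [mul_le_mul_of_nonneg_left key hlam]

end Fobj

theorem stmt12_general (n m p : ℕ) (ψ : EuclideanSpace ℝ (Fin p) → ℝ)
    (hbdd : BddBelow (Set.range ψ))
    (B : Matrix (Fin p) (Fin m) ℝ) (D : Matrix (Fin n) (Fin m) ℝ)
    (lam γ : ℝ) (hlam : 0 < lam) (hγ : 0 < γ)
    (α : ℝ) (hα0 : 0 < α)
    (ρ' : ℝ) (hρ'1 : ρ' < (lam / γ) * ((1 - α) / α))
    (u : ℕ → EuclideanSpace ℝ (Fin n)) (v : ℕ → EuclideanSpace ℝ (Fin m))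
    (hprox : ∀ k, 1 ≤ k →
      InProxL0 (α * γ) (u (k + 1)) ((1 - α) • u k + α • mulVecE D (v k)))
    (hineq : ∀ k, 1 ≤ k →
      Fobj ψ B D lam γ (u (k + 1)) (v (k + 1)) - Fobj ψ B D lam γ (u (k + 1)) (v k) ≤
        (ρ' / 2) * ‖u (k + 1) - u k‖ ^ 2) :
    ∃ N : ℕ, 0 < N ∧ ∀ k, N ≤ k → supp (u k) = supp (u N) := by
  obtain ⟨M, hM⟩ := hbdd
  set c := lam * (1 - α) / (2 * γ * α) - ρ' / 2 with hc_def
  have hc : 0 < c := by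
    have : lam * (1 - α) / (2 * γ * α) = lam / γ * ((1 - α) / α) / 2 := by ring
    linarith
  have hdescent : ∀ k, Fobj ψ B D lam γ (u (k + 2)) (v (k + 2)) +
      c * ‖u (k + 2) - u (k + 1)‖ ^ 2 ≤ Fobj ψ B D lam γ (u (k + 1)) (v (k + 1)) := fun k => by
    have := Fobj_add_le_of_inProxL0 (ψ := ψ) (B := B) hlam.le hγ hα0 (hprox (k + 1) (by omega))
    have := hineq (k + 1) (by omega)
    rw [hc_def, sub_mul]
    linarith
  have hFbdd : BddBelow (Set.range fun k => Fobj ψ B D lam γ (u (k + 1)) (v (k + 1))) :=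
    ⟨M, by rintro _ ⟨k, rfl⟩; exact le_Fobj (fun w => hM ⟨w, rfl⟩) hlam.le hγ.le _ _⟩
  have hstep := tendsto_atTop_zero_of_add_mul_le hc (fun k => sq_nonneg _) hFbdd hdescent
  obtain ⟨K, hK⟩ := eventually_atTop.mp
    (hstep.eventually (gt_mem_nhds (by positivity : (0 : ℝ) < 2 * (α * γ))))
  refine ⟨K + 2, by omega, supp_eq_of_inProxL0_of_norm_sub_sq_lt (mul_pos hα0 hγ) ?_ ?_⟩
  · intro k hk
    obtain ⟨j, rfl⟩ : ∃ j, k = j + 1 := ⟨k - 1, by omega⟩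
    exact ⟨_, hprox j (by omega)⟩
  · intro k hk
    obtain ⟨j, rfl⟩ : ∃ j, k = j + 1 := ⟨k - 1, by omega⟩
    exact hK j (by omega)

/-- **Proposition on fixed support.** Under the assumptions of the inexact
iteration there exists a positive integer `N` with `supp(ũ^k) = supp(ũ^N)` for all
`k ≥ N`. -/
theorem stmt12 (n m p : ℕ) (ψ : EuclideanSpace ℝ (Fin p) → ℝ)
    (hconv : ConvexOn ℝ Set.univ ψ) (hdiff : ContDiff ℝ 1 ψ)
    (hbdd : BddBelow (Set.range ψ))
    (B : Matrix (Fin p) (Fin m) ℝ) (D : Matrix (Fin n) (Fin m) ℝ) (hD : Dᵀ * D = 1)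
    (lam γ : ℝ) (hlam : 0 < lam) (hγ : 0 < γ)
    (α : ℝ) (hα0 : 0 < α) (hα1 : α < 1)
    (ρ' : ℝ) (hρ'0 : 0 < ρ') (hρ'1 : ρ' < (lam / γ) * ((1 - α) / α))
    (u : ℕ → EuclideanSpace ℝ (Fin n)) (v : ℕ → EuclideanSpace ℝ (Fin m))
    (hprox : ∀ k, 1 ≤ k →
      InProxL0 (α * γ) (u (k + 1)) ((1 - α) • u k + α • mulVecE D (v k)))
    (hineq : ∀ k, 1 ≤ k →
      Fobj ψ B D lam γ (u (k + 1)) (v (k + 1)) - Fobj ψ B D lam γ (u (k + 1)) (v k) ≤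
        (ρ' / 2) * ‖u (k + 1) - u k‖ ^ 2) :
    ∃ N : ℕ, 0 < N ∧ ∀ k, N ≤ k → supp (u k) = supp (u N) :=
  stmt12_general n m p ψ hbdd B D lam γ hlam hγ α hα0 ρ' hρ'1 u v hprox hineq

end
end

section
/- Let α ∈ (0,1), C ⊆ {1,…,n}, and define 𝒯 : ℝ^n → ℝ^n by 𝒯(u) := (1−α)T_C u + α T_C D S(Dᵀu). Then 𝒯 is ((1−α)/2)-averaged nonexpansive; that is, the operator 𝒯₁ := (2/(1+α))(𝒯 − ((1−α)/2)·I) satisfies ‖𝒯₁u₁ − 𝒯₁u₂‖₂ ≤ ‖u₁ − u₂‖₂ for all u₁, u₂ ∈ ℝ^n, and 𝒯 = ((1−α)/2)·I + ((1+α)/2)·𝒯₁. -/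
/-!
The proximal map `S` is firmly nonexpansive, hence nonexpansive, and so is `u ↦ D S(Dᵀu)`
because `D` is an isometry and `Dᵀ` a contraction. Since
`(1 - α) T_C - ((1 - α)/2) I = ((1 - α)/2) (2 T_C - I)` and `2 T_C - I` is a reflection,
`𝒯 - ((1 - α)/2) I` is Lipschitz with constant `(1 - α)/2 + α = (1 + α)/2`.
-/

open Matrix

noncomputable section

/-- The coordinate projection `T_C` onto an index set `C`. -/
def Tmat {n : ℕ} (C : Set (Fin n)) (u : EuclideanSpace ℝ (Fin n)) :
    EuclideanSpace ℝ (Fin n) :=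
  (EuclideanSpace.equiv (Fin n) ℝ).symm (C.indicator (fun i => u i))

open RealInnerProductSpace Filter Topology

lemma le_of_sq_le_mul {a b : ℝ} (hb : 0 ≤ b) (h : a ^ 2 ≤ b * a) : a ≤ b := by
  nlinarith

section Prox

variable {E : Type*} [NormedAddCommGroup E] [InnerProductSpace ℝ E] {f : E → ℝ} {c : ℝ}

/-- `2c (x - p)` is a subgradient of `f` at a minimiser `p` of `f + c ‖· - x‖²`. -/
lemma ConvexOn.add_inner_le_of_prox (hf : ConvexOn ℝ Set.univ f)
    {p x : E} (hp : ∀ v, f p + c * ‖p - x‖ ^ 2 ≤ f v + c * ‖v - x‖ ^ 2) (v : E) :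
    f p + 2 * c * ⟪x - p, v - p⟫ ≤ f v := by
  have hsegment : ∀ t : ℝ, 0 < t → t ≤ 1 →
      f p + 2 * c * ⟪x - p, v - p⟫ ≤ f v + t * (c * ‖v - p‖ ^ 2) := by
    intro t ht0 ht1
    have hconv : f ((1 - t) • p + t • v) ≤ (1 - t) * f p + t * f v :=
      hf.2 (Set.mem_univ _) (Set.mem_univ _) (by linarith) ht0.le (by ring)
    have hnorm : ‖((1 - t) • p + t • v) - x‖ ^ 2
        = ‖p - x‖ ^ 2 + 2 * t * ⟪p - x, v - p⟫ + t ^ 2 * ‖v - p‖ ^ 2 := by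
      rw [show ((1 - t) • p + t • v) - x = (p - x) + t • (v - p) by module, norm_add_sq_real,
        real_inner_smul_right, norm_smul, Real.norm_eq_abs, abs_of_pos ht0]
      ring
    have hmin := hp ((1 - t) • p + t • v)
    rw [hnorm] at hmin
    have hswap : ⟪x - p, v - p⟫ = -⟪p - x, v - p⟫ := by
      rw [← inner_neg_left, neg_sub]
    rw [hswap]
    nlinarith
  have hlim : Tendsto (fun t : ℝ => f v + t * (c * ‖v - p‖ ^ 2)) (𝓝[>] 0) (𝓝 (f v)) := by
    have : Continuous fun t : ℝ => f v + t * (c * ‖v - p‖ ^ 2) := by fun_prop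
    simpa using (this.tendsto 0).mono_left nhdsWithin_le_nhds
  refine ge_of_tendsto hlim ?_
  filter_upwards [Ioc_mem_nhdsGT one_pos] with t ht
  exact hsegment t ht.1 ht.2

variable {S : E → E}

lemma sq_norm_sub_le_inner_of_prox (hf : ConvexOn ℝ Set.univ f) (hc : 0 < c)
    (hS : ∀ x v, f (S x) + c * ‖S x - x‖ ^ 2 ≤ f v + c * ‖v - x‖ ^ 2) (x y : E) :
    ‖S x - S y‖ ^ 2 ≤ ⟪x - y, S x - S y⟫ := by
  have hx := hf.add_inner_le_of_prox (hS x) (S y)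
  have hy := hf.add_inner_le_of_prox (hS y) (S x)
  have hsum : ⟪x - S x, S y - S x⟫ + ⟪y - S y, S x - S y⟫
      = ‖S x - S y‖ ^ 2 - ⟪x - y, S x - S y⟫ := by
    rw [← real_inner_self_eq_norm_sq]
    simp only [inner_sub_left, inner_sub_right, real_inner_comm]
    ring
  nlinarith

lemma lipschitzWith_one_of_prox (hf : ConvexOn ℝ Set.univ f) (hc : 0 < c)
    (hS : ∀ x v, f (S x) + c * ‖S x - x‖ ^ 2 ≤ f v + c * ‖v - x‖ ^ 2) :
    LipschitzWith 1 S := by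
  refine LipschitzWith.mk_one fun x y => ?_
  rw [dist_eq_norm, dist_eq_norm]
  refine le_of_sq_le_mul (norm_nonneg _) ?_
  calc ‖S x - S y‖ ^ 2 ≤ ⟪x - y, S x - S y⟫ :=
        sq_norm_sub_le_inner_of_prox hf hc hS x y
    _ ≤ ‖x - y‖ * ‖S x - S y‖ := real_inner_le_norm _ _

end Prox

section MulVecE

variable {n m : ℕ}

lemma mulVecE_sub (A : Matrix (Fin n) (Fin m) ℝ) (u v : EuclideanSpace ℝ (Fin m)) :
    mulVecE A (u - v) = mulVecE A u - mulVecE A v :=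
  map_sub (Matrix.toEuclideanLin A) u v

lemma ofLp_mulVecE (A : Matrix (Fin n) (Fin m) ℝ) (v : EuclideanSpace ℝ (Fin m)) :
    (mulVecE A v).ofLp = A *ᵥ v.ofLp :=
  rfl

lemma mulVecE_mulVecE {k : ℕ} (A : Matrix (Fin n) (Fin m) ℝ) (B : Matrix (Fin m) (Fin k) ℝ)
    (v : EuclideanSpace ℝ (Fin k)) : mulVecE A (mulVecE B v) = mulVecE (A * B) v := by
  apply WithLp.ofLp_injective
  simp [ofLp_mulVecE, Matrix.mulVec_mulVec]

lemma inner_mulVecE_transpose (A : Matrix (Fin n) (Fin m) ℝ) (u : EuclideanSpace ℝ (Fin n))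
    (w : EuclideanSpace ℝ (Fin m)) : ⟪mulVecE Aᵀ u, w⟫ = ⟪u, mulVecE A w⟫ := by
  simp [EuclideanSpace.inner_eq_star_dotProduct, ofLp_mulVecE, Matrix.dotProduct_mulVec,
    Matrix.vecMul_transpose, dotProduct_comm]

variable {D : Matrix (Fin n) (Fin m) ℝ}

lemma norm_mulVecE_of_transpose_mul_self (hD : Dᵀ * D = 1) (v : EuclideanSpace ℝ (Fin m)) :
    ‖mulVecE D v‖ = ‖v‖ := by
  have h : ⟪mulVecE D v, mulVecE D v⟫ = ⟪v, v⟫ := by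
    rw [← inner_mulVecE_transpose, mulVecE_mulVecE, hD]
    simp [mulVecE]
  rwa [real_inner_self_eq_norm_sq, real_inner_self_eq_norm_sq,
    sq_eq_sq₀ (norm_nonneg _) (norm_nonneg _)] at h

lemma norm_mulVecE_transpose_le (hD : Dᵀ * D = 1) (u : EuclideanSpace ℝ (Fin n)) :
    ‖mulVecE Dᵀ u‖ ≤ ‖u‖ := by
  refine le_of_sq_le_mul (norm_nonneg _) ?_
  calc ‖mulVecE Dᵀ u‖ ^ 2 = ⟪u, mulVecE D (mulVecE Dᵀ u)⟫ := by
        rw [← inner_mulVecE_transpose, real_inner_self_eq_norm_sq]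
    _ ≤ ‖u‖ * ‖mulVecE D (mulVecE Dᵀ u)‖ := real_inner_le_norm _ _
    _ = ‖u‖ * ‖mulVecE Dᵀ u‖ := by rw [norm_mulVecE_of_transpose_mul_self hD]

lemma lipschitzWith_one_mulVecE (hD : Dᵀ * D = 1) : LipschitzWith 1 (mulVecE D) :=
  LipschitzWith.mk_one fun v w => by
    rw [dist_eq_norm, dist_eq_norm, ← mulVecE_sub, norm_mulVecE_of_transpose_mul_self hD]

lemma lipschitzWith_one_mulVecE_transpose (hD : Dᵀ * D = 1) : LipschitzWith 1 (mulVecE Dᵀ) :=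
  LipschitzWith.mk_one fun u w => by
    rw [dist_eq_norm, dist_eq_norm, ← mulVecE_sub]
    exact norm_mulVecE_transpose_le hD _

end MulVecE

section Tmat

variable {n : ℕ} (C : Set (Fin n))

lemma Tmat_sub (u v : EuclideanSpace ℝ (Fin n)) : Tmat C (u - v) = Tmat C u - Tmat C v := by
  ext i
  by_cases h : i ∈ C <;> simp [Tmat, h]

lemma norm_two_smul_Tmat_sub_self (u : EuclideanSpace ℝ (Fin n)) :
    ‖(2 : ℝ) • Tmat C u - u‖ = ‖u‖ := by
  rw [EuclideanSpace.norm_eq, EuclideanSpace.norm_eq]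
  congr 1
  refine Finset.sum_congr rfl fun i _ => ?_
  by_cases h : i ∈ C <;> simp [Tmat, h]; ring_nf

lemma norm_Tmat_le (u : EuclideanSpace ℝ (Fin n)) : ‖Tmat C u‖ ≤ ‖u‖ := by
  calc ‖Tmat C u‖ = ‖(1 / 2 : ℝ) • (((2 : ℝ) • Tmat C u - u) + u)‖ := by congr 1; module
    _ ≤ (1 / 2) * (‖(2 : ℝ) • Tmat C u - u‖ + ‖u‖) := by
        rw [norm_smul, Real.norm_of_nonneg (by norm_num)]
        gcongr
        exact norm_add_le _ _
    _ = ‖u‖ := by rw [norm_two_smul_Tmat_sub_self]; ring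

lemma norm_smul_reflection_add_smul_Tmat_le {k α : ℝ} (hk : 0 ≤ k) (hα : 0 ≤ α)
    {a q : EuclideanSpace ℝ (Fin n)} (hq : ‖q‖ ≤ ‖a‖) :
    ‖k • ((2 : ℝ) • Tmat C a - a) + α • Tmat C q‖ ≤ (k + α) * ‖a‖ := by
  calc ‖k • ((2 : ℝ) • Tmat C a - a) + α • Tmat C q‖
        ≤ ‖k • ((2 : ℝ) • Tmat C a - a)‖ + ‖α • Tmat C q‖ := norm_add_le _ _
    _ = k * ‖a‖ + α * ‖Tmat C q‖ := by
        rw [norm_smul, norm_smul, norm_two_smul_Tmat_sub_self, Real.norm_of_nonneg hk,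
          Real.norm_of_nonneg hα]
    _ ≤ k * ‖a‖ + α * ‖a‖ := by gcongr; exact (norm_Tmat_le C q).trans hq
    _ = (k + α) * ‖a‖ := by ring

end Tmat

theorem stmt17_general (n m p : ℕ) (ψ : EuclideanSpace ℝ (Fin p) → ℝ)
    (hconv : ConvexOn ℝ Set.univ ψ)
    (B : Matrix (Fin p) (Fin m) ℝ) (D : Matrix (Fin n) (Fin m) ℝ) (hD : Dᵀ * D = 1)
    (lam γ : ℝ) (hlam : 0 < lam) (hγ : 0 < γ)
    (S : EuclideanSpace ℝ (Fin m) → EuclideanSpace ℝ (Fin m))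
    (hS : ∀ x v, ψ (mulVecE B (S x)) + (lam / (2 * γ)) * ‖S x - x‖ ^ 2 ≤
      ψ (mulVecE B v) + (lam / (2 * γ)) * ‖v - x‖ ^ 2)
    (α : ℝ) (hα0 : 0 < α) (hα1 : α < 1)
    (C : Set (Fin n))
    (T T₁ : EuclideanSpace ℝ (Fin n) → EuclideanSpace ℝ (Fin n))
    (hT : ∀ u, T u = (1 - α) • Tmat C u + α • Tmat C (mulVecE D (S (mulVecE Dᵀ u))))
    (hT₁ : ∀ u, T₁ u = (2 / (1 + α)) • (T u - ((1 - α) / 2) • u)) :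
    (∀ u₁ u₂, ‖T₁ u₁ - T₁ u₂‖ ≤ ‖u₁ - u₂‖) ∧
    (∀ u, T u = ((1 - α) / 2) • u + ((1 + α) / 2) • T₁ u) := by
  set Q := mulVecE D ∘ S ∘ mulVecE Dᵀ with hQ_def
  have hQ : LipschitzWith 1 Q := by
    have hS_lip := lipschitzWith_one_of_prox
      (hconv.comp_linearMap (Matrix.toEuclideanLin B)) (by positivity) hS
    simpa using (lipschitzWith_one_mulVecE hD).comp
      (hS_lip.comp (lipschitzWith_one_mulVecE_transpose hD))
  have hT_sub : ∀ u, T u - ((1 - α) / 2) • u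
      = ((1 - α) / 2) • ((2 : ℝ) • Tmat C u - u) + α • Tmat C (Q u) := by
    intro u
    rw [hT u, hQ_def, Function.comp_apply, Function.comp_apply]
    module
  refine ⟨fun u₁ u₂ => ?_, fun u => ?_⟩
  · have hT₁_sub : T₁ u₁ - T₁ u₂ = (2 / (1 + α)) • (((1 - α) / 2) •
        ((2 : ℝ) • Tmat C (u₁ - u₂) - (u₁ - u₂)) + α • Tmat C (Q u₁ - Q u₂)) := by
      rw [hT₁, hT₁, ← smul_sub, hT_sub, hT_sub, Tmat_sub, Tmat_sub]
      module
    calc ‖T₁ u₁ - T₁ u₂‖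
        ≤ (2 / (1 + α)) * (((1 - α) / 2 + α) * ‖u₁ - u₂‖) := by
          rw [hT₁_sub, norm_smul, Real.norm_of_nonneg (by positivity)]
          gcongr
          exact norm_smul_reflection_add_smul_Tmat_le C (by linarith) hα0.le
            (by simpa using hQ.norm_sub_le u₁ u₂)
      _ = ‖u₁ - u₂‖ := by field_simp; ring
  · have hcancel : (1 + α) / 2 * (2 / (1 + α)) = 1 := by field_simp
    rw [hT₁, smul_smul, hcancel]
    module

/-- For `α ∈ (0,1)` the operator `𝒯(u) = (1−α)T_C u + α T_C D S(Dᵀu)`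
is `((1−α)/2)`-averaged nonexpansive: `𝒯₁ := (2/(1+α))(𝒯 − ((1−α)/2)·I)` is nonexpansive
and `𝒯 = ((1−α)/2)·I + ((1+α)/2)·𝒯₁`. -/
theorem stmt17 (n m p : ℕ) (ψ : EuclideanSpace ℝ (Fin p) → ℝ)
    (hconv : ConvexOn ℝ Set.univ ψ) (hdiff : ContDiff ℝ 1 ψ)
    (B : Matrix (Fin p) (Fin m) ℝ) (D : Matrix (Fin n) (Fin m) ℝ) (hD : Dᵀ * D = 1)
    (lam γ : ℝ) (hlam : 0 < lam) (hγ : 0 < γ)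
    (S : EuclideanSpace ℝ (Fin m) → EuclideanSpace ℝ (Fin m))
    (hS : ∀ x v, ψ (mulVecE B (S x)) + (lam / (2 * γ)) * ‖S x - x‖ ^ 2 ≤
      ψ (mulVecE B v) + (lam / (2 * γ)) * ‖v - x‖ ^ 2)
    (α : ℝ) (hα0 : 0 < α) (hα1 : α < 1)
    (C : Set (Fin n))
    (T T₁ : EuclideanSpace ℝ (Fin n) → EuclideanSpace ℝ (Fin n))
    (hT : ∀ u, T u = (1 - α) • Tmat C u + α • Tmat C (mulVecE D (S (mulVecE Dᵀ u))))
    (hT₁ : ∀ u, T₁ u = (2 / (1 + α)) • (T u - ((1 - α) / 2) • u)) :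
    (∀ u₁ u₂, ‖T₁ u₁ - T₁ u₂‖ ≤ ‖u₁ - u₂‖) ∧
    (∀ u, T u = ((1 - α) / 2) • u + ((1 + α) / 2) • T₁ u) :=
  stmt17_general n m p ψ hconv B D hD lam γ hlam hγ S hS α hα0 hα1 C T T₁ hT hT₁

end
end
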